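/- At every point of U, r · (d/dt at t=0 of (R(t)_α × R(t)_β)) = A₁A₂ · (div X + 2v_n), where X is the tangential field X = −v_n·(r − (r·N)·N) + (r·N)·η. -/

import Mathlib

noncomputable section

/-- Vectors in ℝ³. -/
abbrev V3 : Type := Fin 3 → ℝ

/-- Euclidean dot product on ℝ³. -/
def dot3 (a b : V3) : ℝ := a 0 * b 0 + a 1 * b 1 + a 2 * b 2

/-- Cross product on ℝ³. -/
def cross3 (a b : V3) : V3 :=
  ![a 1 * b 2 - a 2 * b 1, a 2 * b 0 - a 0 * b 2, a 0 * b 1 - a 1 * b 0]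

/-- Euclidean norm on ℝ³. -/
def norm3 (a : V3) : ℝ := Real.sqrt (dot3 a a)

/-- Partial derivative in the first (α) direction. -/
def pd1 {E : Type*} [NormedAddCommGroup E] [NormedSpace ℝ E]
    (f : ℝ × ℝ → E) (x : ℝ × ℝ) : E := fderiv ℝ f x (1, 0)

/-- Partial derivative in the second (β) direction. -/
def pd2 {E : Type*} [NormedAddCommGroup E] [NormedSpace ℝ E]
    (f : ℝ × ℝ → E) (x : ℝ × ℝ) : E := fderiv ℝ f x (0, 1)

def A₁ (r : ℝ × ℝ → V3) (x : ℝ × ℝ) : ℝ := norm3 (pd1 r x)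
def A₂ (r : ℝ × ℝ → V3) (x : ℝ × ℝ) : ℝ := norm3 (pd2 r x)
def e₁ (r : ℝ × ℝ → V3) (x : ℝ × ℝ) : V3 := (A₁ r x)⁻¹ • pd1 r x
def e₂ (r : ℝ × ℝ → V3) (x : ℝ × ℝ) : V3 := (A₂ r x)⁻¹ • pd2 r x
/-- Unit normal N = e₁ × e₂. -/
def NN (r : ℝ × ℝ → V3) (x : ℝ × ℝ) : V3 := cross3 (e₁ r x) (e₂ r x)
/-- p = (A₁)_β / A₂. -/
def pp (r : ℝ × ℝ → V3) (x : ℝ × ℝ) : ℝ := pd2 (A₁ r) x / A₂ r x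
/-- q = (A₂)_α / A₁. -/
def qq (r : ℝ × ℝ → V3) (x : ℝ × ℝ) : ℝ := pd1 (A₂ r) x / A₁ r x
/-- H∘ = −κ₁ A₁. -/
def Ho (r : ℝ × ℝ → V3) (κ₁ : ℝ × ℝ → ℝ) (x : ℝ × ℝ) : ℝ := -κ₁ x * A₁ r x
/-- K∘ = −κ₂ A₂. -/
def Ko (r : ℝ × ℝ → V3) (κ₂ : ℝ × ℝ → ℝ) (x : ℝ × ℝ) : ℝ := -κ₂ x * A₂ r x

/-- Surface divergence of the tangential field f₁·e₁ + f₂·e₂. -/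
def sdiv (r : ℝ × ℝ → V3) (f₁ f₂ : ℝ × ℝ → ℝ) (x : ℝ × ℝ) : ℝ :=
  (pd1 (fun y => f₁ y * A₂ r y) x + pd2 (fun y => f₂ y * A₁ r y) x) / (A₁ r x * A₂ r x)

/-- Surface gradient ∇f = (f_α/A₁)·e₁ + (f_β/A₂)·e₂. -/
def sgrad (r : ℝ × ℝ → V3) (f : ℝ × ℝ → ℝ) (x : ℝ × ℝ) : V3 :=
  (pd1 f x / A₁ r x) • e₁ r x + (pd2 f x / A₂ r x) • e₂ r x


/-- Variation vector field V = v₁·e₁ + v₂·e₂ + v_n·N. -/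
def Vfield (r : ℝ × ℝ → V3) (v₁ v₂ v_n : ℝ × ℝ → ℝ) (y : ℝ × ℝ) : V3 :=
  v₁ y • e₁ r y + v₂ y • e₂ r y + v_n y • NN r y

/-- The deformed surface R(t) = r + t·V. -/
def Rt (r Vf : ℝ × ℝ → V3) (t : ℝ) (y : ℝ × ℝ) : V3 := r y + t • Vf y

/-- Infinitesimal strain ε̄₁ = ((v₁)_α + p v₂ + H∘ v_n)/A₁. -/
def eps1 (r : ℝ × ℝ → V3) (κ₁ : ℝ × ℝ → ℝ) (v₁ v₂ v_n : ℝ × ℝ → ℝ) (x : ℝ × ℝ) : ℝ :=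
  (pd1 v₁ x + pp r x * v₂ x + Ho r κ₁ x * v_n x) / A₁ r x

/-- Infinitesimal strain ε̄₂ = ((v₂)_β + q v₁ + K∘ v_n)/A₂. -/
def eps2 (r : ℝ × ℝ → V3) (κ₂ : ℝ × ℝ → ℝ) (v₁ v₂ v_n : ℝ × ℝ → ℝ) (x : ℝ × ℝ) : ℝ :=
  (pd2 v₂ x + qq r x * v₁ x + Ko r κ₂ x * v_n x) / A₂ r x

/-- Infinitesimal rotation ϑ̄ = (−(v_n)_α + H∘ v₁)/A₁. -/
def thb (r : ℝ × ℝ → V3) (κ₁ : ℝ × ℝ → ℝ) (v₁ v_n : ℝ × ℝ → ℝ) (x : ℝ × ℝ) : ℝ :=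
  (-(pd1 v_n x) + Ho r κ₁ x * v₁ x) / A₁ r x

/-- Infinitesimal rotation ψ̄ = (−(v_n)_β + K∘ v₂)/A₂. -/
def psb (r : ℝ × ℝ → V3) (κ₂ : ℝ × ℝ → ℝ) (v₂ v_n : ℝ × ℝ → ℝ) (x : ℝ × ℝ) : ℝ :=
  (-(pd2 v_n x) + Ko r κ₂ x * v₂ x) / A₂ r x

/-- Shear ω₁ = (v_α − p u)/A₁. -/
def om1 (r : ℝ × ℝ → V3) (u v : ℝ × ℝ → ℝ) (x : ℝ × ℝ) : ℝ :=
  (pd1 v x - pp r x * u x) / A₁ r x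

/-- Shear ω₂ = (u_β − q v)/A₂. -/
def om2 (r : ℝ × ℝ → V3) (u v : ℝ × ℝ → ℝ) (x : ℝ × ℝ) : ℝ :=
  (pd2 u x - qq r x * v x) / A₂ r x

/-- First fundamental form coefficient E. -/
def EE (R : ℝ × ℝ → V3) (x : ℝ × ℝ) : ℝ := dot3 (pd1 R x) (pd1 R x)
/-- First fundamental form coefficient F. -/
def FF (R : ℝ × ℝ → V3) (x : ℝ × ℝ) : ℝ := dot3 (pd1 R x) (pd2 R x)
/-- First fundamental form coefficient G. -/
def GG (R : ℝ × ℝ → V3) (x : ℝ × ℝ) : ℝ := dot3 (pd2 R x) (pd2 R x)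
/-- Unit normal of a parametrized surface. -/
def unitN (R : ℝ × ℝ → V3) (x : ℝ × ℝ) : V3 :=
  (norm3 (cross3 (pd1 R x) (pd2 R x)))⁻¹ • cross3 (pd1 R x) (pd2 R x)
/-- Second fundamental form coefficient e = N·R_αα. -/
def ee (R : ℝ × ℝ → V3) (x : ℝ × ℝ) : ℝ := dot3 (unitN R x) (pd1 (pd1 R) x)
/-- Second fundamental form coefficient f = N·R_αβ. -/
def ff (R : ℝ × ℝ → V3) (x : ℝ × ℝ) : ℝ := dot3 (unitN R x) (pd2 (pd1 R) x)
/-- Second fundamental form coefficient g = N·R_ββ. -/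
def gg (R : ℝ × ℝ → V3) (x : ℝ × ℝ) : ℝ := dot3 (unitN R x) (pd2 (pd2 R) x)
/-- Mean curvature H = (eG − 2fF + gE)/(2(EG − F²)). -/
def meanH (R : ℝ × ℝ → V3) (x : ℝ × ℝ) : ℝ :=
  (ee R x * GG R x - 2 * ff R x * FF R x + gg R x * EE R x) /
    (2 * (EE R x * GG R x - FF R x ^ 2))
/-- κ̃₁ = −(N_α·R_α)/‖R_α‖². -/
def princ1 (R : ℝ × ℝ → V3) (x : ℝ × ℝ) : ℝ :=
  -(dot3 (pd1 (unitN R) x) (pd1 R x)) / (norm3 (pd1 R x)) ^ 2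
/-- κ̃₂ = −(N_β·R_β)/‖R_β‖². -/
def princ2 (R : ℝ × ℝ → V3) (x : ℝ × ℝ) : ℝ :=
  -(dot3 (pd2 (unitN R) x) (pd2 R x)) / (norm3 (pd2 R x)) ^ 2

/-- Linear Weingarten functional integrand (a·H + b)·dA + (c/3)·R·(R_α × R_β). -/
def Phi (a b c : ℝ) (R : ℝ × ℝ → V3) (x : ℝ × ℝ) : ℝ :=
  (a * meanH R x + b) * norm3 (cross3 (pd1 R x) (pd2 R x)) +
    c / 3 * dot3 (R x) (cross3 (pd1 R x) (pd2 R x))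

/-! ### Auxiliary lemmas -/

section AuxAlgebra

lemma c3_add_left (u v w : V3) : cross3 (u + v) w = cross3 u w + cross3 v w := by
  funext i; fin_cases i <;> simp [cross3] <;> ring
lemma c3_add_right (u v w : V3) : cross3 u (v + w) = cross3 u v + cross3 u w := by
  funext i; fin_cases i <;> simp [cross3] <;> ring
lemma c3_smul_left (s : ℝ) (u w : V3) : cross3 (s • u) w = s • cross3 u w := by
  funext i; fin_cases i <;> simp [cross3] <;> ring
lemma c3_smul_right (s : ℝ) (u w : V3) : cross3 u (s • w) = s • cross3 u w := by
  funext i; fin_cases i <;> simp [cross3] <;> ring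
lemma c3_self (u : V3) : cross3 u u = 0 := by
  funext i; fin_cases i <;> simp [cross3] <;> ring
lemma c3_antisymm (u v : V3) : cross3 u v = -cross3 v u := by
  funext i; fin_cases i <;> simp [cross3] <;> ring
lemma trip_left (u v w : V3) : cross3 (cross3 u v) w = dot3 u w • v - dot3 v w • u := by
  funext i; fin_cases i <;> simp [cross3, dot3] <;> ring
lemma trip_right (u v w : V3) : cross3 u (cross3 v w) = dot3 u w • v - dot3 u v • w := by
  funext i; fin_cases i <;> simp [cross3, dot3] <;> ring
lemma d3_add_right (u v w : V3) : dot3 u (v + w) = dot3 u v + dot3 u w := by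
  simp [dot3]; ring
lemma d3_smul_right (s : ℝ) (u v : V3) : dot3 u (s • v) = s * dot3 u v := by
  simp [dot3]; ring
lemma d3_sub_right (u v w : V3) : dot3 u (v - w) = dot3 u v - dot3 u w := by
  simp [dot3]; ring
lemma d3_zero_right (u : V3) : dot3 u 0 = 0 := by simp [dot3]
lemma d3_neg_right (u v : V3) : dot3 u (-v) = -dot3 u v := by simp [dot3]; ring
lemma d3_cross_self_left (u v : V3) : dot3 u (cross3 u v) = 0 := by
  simp [cross3, dot3]; ring
lemma d3_cross_self_right (u v : V3) : dot3 v (cross3 u v) = 0 := by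
  simp [cross3, dot3]; ring

lemma d3_self_pos {a : V3} (h : a ≠ 0) : 0 < dot3 a a := by
  by_contra hc
  push_neg at hc
  simp only [dot3] at hc
  have h0 : a 0 = 0 := by nlinarith [sq_nonneg (a 0), sq_nonneg (a 1), sq_nonneg (a 2)]
  have h1 : a 1 = 0 := by nlinarith [sq_nonneg (a 0), sq_nonneg (a 1), sq_nonneg (a 2)]
  have h2 : a 2 = 0 := by nlinarith [sq_nonneg (a 0), sq_nonneg (a 1), sq_nonneg (a 2)]
  exact h (funext fun i => by fin_cases i <;> assumption)

lemma norm3_sq {a : V3} (h : a ≠ 0) : dot3 a a = (norm3 a) ^ 2 := by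
  rw [norm3, Real.sq_sqrt (d3_self_pos h).le]

lemma norm3_ne {a : V3} (h : a ≠ 0) : norm3 a ≠ 0 :=
  (Real.sqrt_pos.mpr (d3_self_pos h)).ne'

end AuxAlgebra

section KeyAlgebra

variable (rv a b : V3) (A1 A2 v1 v2 vn : ℝ)

lemma key1 (hA1 : A1 ≠ 0) (hA2 : A2 ≠ 0)
    (haa : dot3 a a = A1 ^ 2) (hbb : dot3 b b = A2 ^ 2) (hab : dot3 a b = 0) :
    (-vn * dot3 rv (A1⁻¹ • a) + dot3 rv (cross3 (A1⁻¹ • a) (A2⁻¹ • b)) * v1) * A2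
      = dot3 rv (cross3 (v1 • (A1⁻¹ • a) + v2 • (A2⁻¹ • b)
          + vn • cross3 (A1⁻¹ • a) (A2⁻¹ • b)) b) := by
  simp only [c3_add_left, c3_smul_left, c3_smul_right, c3_self, trip_left, trip_right,
    d3_add_right, d3_smul_right, d3_sub_right, d3_zero_right, hab, haa, hbb, smul_zero,
    smul_smul, zero_smul, zero_sub, d3_neg_right]
  field_simp
  ring

lemma key2 (hA1 : A1 ≠ 0) (hA2 : A2 ≠ 0)
    (haa : dot3 a a = A1 ^ 2) (hbb : dot3 b b = A2 ^ 2) (hab : dot3 a b = 0) :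
    (-vn * dot3 rv (A2⁻¹ • b) + dot3 rv (cross3 (A1⁻¹ • a) (A2⁻¹ • b)) * v2) * A1
      = dot3 rv (cross3 a (v1 • (A1⁻¹ • a) + v2 • (A2⁻¹ • b)
          + vn • cross3 (A1⁻¹ • a) (A2⁻¹ • b))) := by
  simp only [c3_add_right, c3_smul_left, c3_smul_right, c3_self, trip_left, trip_right,
    d3_add_right, d3_smul_right, d3_sub_right, d3_zero_right, hab, haa, hbb, smul_zero,
    smul_smul, zero_smul, zero_sub, d3_neg_right]
  field_simp
  ring

lemma key3 (hA1 : A1 ≠ 0) (hA2 : A2 ≠ 0)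
    (haa : dot3 a a = A1 ^ 2) (hbb : dot3 b b = A2 ^ 2) (hab : dot3 a b = 0) :
    dot3 a (cross3 (v1 • (A1⁻¹ • a) + v2 • (A2⁻¹ • b)
        + vn • cross3 (A1⁻¹ • a) (A2⁻¹ • b)) b) = -(A1 * A2) * vn := by
  simp only [c3_add_left, c3_smul_left, c3_smul_right, c3_self, trip_left, trip_right,
    d3_add_right, d3_smul_right, d3_sub_right, d3_zero_right, hab, haa, hbb, smul_zero,
    smul_smul, zero_smul, zero_sub, d3_neg_right, d3_cross_self_left, d3_cross_self_right]
  field_simp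
  ring

lemma key4 (hA1 : A1 ≠ 0) (hA2 : A2 ≠ 0)
    (haa : dot3 a a = A1 ^ 2) (hbb : dot3 b b = A2 ^ 2) (hab : dot3 a b = 0) :
    dot3 b (cross3 a (v1 • (A1⁻¹ • a) + v2 • (A2⁻¹ • b)
        + vn • cross3 (A1⁻¹ • a) (A2⁻¹ • b))) = -(A1 * A2) * vn := by
  simp only [c3_add_right, c3_smul_left, c3_smul_right, c3_self, trip_left, trip_right,
    d3_add_right, d3_smul_right, d3_sub_right, d3_zero_right, hab, haa, hbb, smul_zero,
    smul_smul, zero_smul, zero_sub, d3_neg_right, d3_cross_self_left, d3_cross_self_right]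
  field_simp
  ring

end KeyAlgebra

section AuxCalculus

lemma diffAt_comp {f : ℝ × ℝ → V3} {x : ℝ × ℝ} (hf : DifferentiableAt ℝ f x) (i : Fin 3) :
    DifferentiableAt ℝ (fun y => f y i) x :=
  ((ContinuousLinearMap.proj i : V3 →L[ℝ] ℝ).differentiableAt).comp x hf

lemma fdw_comp {f : ℝ × ℝ → V3} {x : ℝ × ℝ} (hf : DifferentiableAt ℝ f x) (i : Fin 3)
    (w : ℝ × ℝ) : fderiv ℝ (fun y => f y i) x w = fderiv ℝ f x w i := by
  have := ((ContinuousLinearMap.proj i : V3 →L[ℝ] ℝ).hasFDerivAt.comp x hf.hasFDerivAt).fderiv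
  rw [show (fun y => f y i)
      = (⇑(ContinuousLinearMap.proj (R := ℝ) (φ := fun _ : Fin 3 => ℝ) i) ∘ f) from rfl, this]
  simp

lemma fdw_mul {f g : ℝ × ℝ → ℝ} {x : ℝ × ℝ} (hf : DifferentiableAt ℝ f x)
    (hg : DifferentiableAt ℝ g x) (w : ℝ × ℝ) :
    fderiv ℝ (fun y => f y * g y) x w = fderiv ℝ f x w * g x + f x * fderiv ℝ g x w := by
  rw [fderiv_fun_mul hf hg]; simp; ring

lemma fdw_add {f g : ℝ × ℝ → ℝ} {x : ℝ × ℝ} (hf : DifferentiableAt ℝ f x)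
    (hg : DifferentiableAt ℝ g x) (w : ℝ × ℝ) :
    fderiv ℝ (fun y => f y + g y) x w = fderiv ℝ f x w + fderiv ℝ g x w := by
  rw [fderiv_fun_add hf hg]; simp

lemma fdw_sub {f g : ℝ × ℝ → ℝ} {x : ℝ × ℝ} (hf : DifferentiableAt ℝ f x)
    (hg : DifferentiableAt ℝ g x) (w : ℝ × ℝ) :
    fderiv ℝ (fun y => f y - g y) x w = fderiv ℝ f x w - fderiv ℝ g x w := by
  rw [fderiv_fun_sub hf hg]; simp

lemma diffAt_cross {f g : ℝ × ℝ → V3} {x : ℝ × ℝ} (hf : DifferentiableAt ℝ f x)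
    (hg : DifferentiableAt ℝ g x) :
    DifferentiableAt ℝ (fun y => cross3 (f y) (g y)) x := by
  rw [show (fun y => cross3 (f y) (g y)) = fun y (i : Fin 3) =>
    ![f y 1 * g y 2 - f y 2 * g y 1, f y 2 * g y 0 - f y 0 * g y 2,
      f y 0 * g y 1 - f y 1 * g y 0] i from rfl]
  apply differentiableAt_pi.mpr
  intro i
  fin_cases i <;> simp <;>
    exact ((diffAt_comp hf _).mul (diffAt_comp hg _)).sub
      ((diffAt_comp hf _).mul (diffAt_comp hg _))

lemma diffAt_dot {f g : ℝ × ℝ → V3} {x : ℝ × ℝ} (hf : DifferentiableAt ℝ f x)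
    (hg : DifferentiableAt ℝ g x) :
    DifferentiableAt ℝ (fun y => dot3 (f y) (g y)) x := by
  simp only [dot3]
  exact (((diffAt_comp hf 0).mul (diffAt_comp hg 0)).add
    ((diffAt_comp hf 1).mul (diffAt_comp hg 1))).add ((diffAt_comp hf 2).mul (diffAt_comp hg 2))

lemma fdw_dot {f g : ℝ × ℝ → V3} {x : ℝ × ℝ} (hf : DifferentiableAt ℝ f x)
    (hg : DifferentiableAt ℝ g x) (w : ℝ × ℝ) :
    fderiv ℝ (fun y => dot3 (f y) (g y)) x w
      = dot3 (fderiv ℝ f x w) (g x) + dot3 (f x) (fderiv ℝ g x w) := by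
  simp only [dot3]
  rw [fdw_add (((diffAt_comp hf 0).fun_mul (diffAt_comp hg 0)).fun_add
        ((diffAt_comp hf 1).fun_mul (diffAt_comp hg 1))) ((diffAt_comp hf 2).fun_mul (diffAt_comp hg 2)),
      fdw_add ((diffAt_comp hf 0).fun_mul (diffAt_comp hg 0))
        ((diffAt_comp hf 1).fun_mul (diffAt_comp hg 1)),
      fdw_mul (diffAt_comp hf 0) (diffAt_comp hg 0),
      fdw_mul (diffAt_comp hf 1) (diffAt_comp hg 1),
      fdw_mul (diffAt_comp hf 2) (diffAt_comp hg 2),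
      fdw_comp hf, fdw_comp hf, fdw_comp hf, fdw_comp hg, fdw_comp hg, fdw_comp hg]
  ring

lemma fdw_cross {f g : ℝ × ℝ → V3} {x : ℝ × ℝ} (hf : DifferentiableAt ℝ f x)
    (hg : DifferentiableAt ℝ g x) (w : ℝ × ℝ) :
    fderiv ℝ (fun y => cross3 (f y) (g y)) x w
      = cross3 (fderiv ℝ f x w) (g x) + cross3 (f x) (fderiv ℝ g x w) := by
  funext i
  rw [← fdw_comp (diffAt_cross hf hg) i w]
  have e1 : ∀ j k l m : Fin 3,
      (fun y => cross3 (f y) (g y) i) = (fun y => f y j * g y k - f y l * g y m) →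
      fderiv ℝ (fun y => cross3 (f y) (g y) i) x w
        = fderiv ℝ f x w j * g x k + f x j * fderiv ℝ g x w k
          - (fderiv ℝ f x w l * g x m + f x l * fderiv ℝ g x w m) := by
    intro j k l m h
    rw [h, fdw_sub ((diffAt_comp hf j).fun_mul (diffAt_comp hg k))
        ((diffAt_comp hf l).fun_mul (diffAt_comp hg m)),
      fdw_mul (diffAt_comp hf j) (diffAt_comp hg k), fdw_mul (diffAt_comp hf l) (diffAt_comp hg m),
      fdw_comp hf, fdw_comp hf, fdw_comp hg, fdw_comp hg]
  fin_cases i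
  · rw [e1 1 2 2 1 (by funext y; simp [cross3])]; simp [cross3]; ring
  · rw [e1 2 0 0 2 (by funext y; simp [cross3])]; simp [cross3]; ring
  · rw [e1 0 1 1 0 (by funext y; simp [cross3])]; simp [cross3]; ring

lemma diffAt_pd1 {r : ℝ × ℝ → V3} {x : ℝ × ℝ} (h : ContDiffAt ℝ (⊤ : ℕ∞) r x) :
    DifferentiableAt ℝ (pd1 r) x := by
  have h1 : ContDiffAt ℝ 1 (fderiv ℝ r) x := h.fderiv_right (WithTop.coe_le_coe.mpr le_top)
  exact (h1.differentiableAt one_ne_zero).clm_apply (differentiableAt_const _)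

lemma diffAt_pd2 {r : ℝ × ℝ → V3} {x : ℝ × ℝ} (h : ContDiffAt ℝ (⊤ : ℕ∞) r x) :
    DifferentiableAt ℝ (pd2 r) x := by
  have h1 : ContDiffAt ℝ 1 (fderiv ℝ r) x := h.fderiv_right (WithTop.coe_le_coe.mpr le_top)
  exact (h1.differentiableAt one_ne_zero).clm_apply (differentiableAt_const _)

lemma pd_symm {r : ℝ × ℝ → V3} {x : ℝ × ℝ} (h : ContDiffAt ℝ (⊤ : ℕ∞) r x) :
    pd1 (pd2 r) x = pd2 (pd1 r) x := by
  have h1 : ContDiffAt ℝ 1 (fderiv ℝ r) x := h.fderiv_right (WithTop.coe_le_coe.mpr le_top)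
  have hd : DifferentiableAt ℝ (fderiv ℝ r) x := h1.differentiableAt one_ne_zero
  have hsym := h.isSymmSndFDerivAt (by rw [minSmoothness_of_isRCLikeNormedField]; exact WithTop.coe_le_coe.mpr (le_top : (2:ℕ∞) ≤ ⊤))
  have e : ∀ v w : ℝ × ℝ, fderiv ℝ (fun y => fderiv ℝ r y v) x w
      = fderiv ℝ (fderiv ℝ r) x w v := by
    intro v w
    rw [fderiv_clm_apply hd (differentiableAt_const v)]
    simp
  show fderiv ℝ (fun y => fderiv ℝ r y (0,1)) x (1,0)
    = fderiv ℝ (fun y => fderiv ℝ r y (1,0)) x (0,1)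
  rw [e, e, hsym]

lemma cross_quad (u u' v v' : V3) (t : ℝ) :
    cross3 (u + t • u') (v + t • v')
      = cross3 u v + t • (cross3 u' v + cross3 u v') + (t * t) • cross3 u' v' := by
  funext i; fin_cases i <;> simp [cross3] <;> ring

lemma pd1_Rt {r W : ℝ × ℝ → V3} {x : ℝ × ℝ} (hr : DifferentiableAt ℝ r x)
    (hW : DifferentiableAt ℝ W x) (t : ℝ) :
    pd1 (Rt r W t) x = pd1 r x + t • pd1 W x := by
  show fderiv ℝ (fun y => r y + t • W y) x (1,0) = _
  rw [fderiv_fun_add hr (hW.fun_const_smul t), fderiv_fun_const_smul hW t]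
  simp [pd1]

lemma pd2_Rt {r W : ℝ × ℝ → V3} {x : ℝ × ℝ} (hr : DifferentiableAt ℝ r x)
    (hW : DifferentiableAt ℝ W x) (t : ℝ) :
    pd2 (Rt r W t) x = pd2 r x + t • pd2 W x := by
  show fderiv ℝ (fun y => r y + t • W y) x (0,1) = _
  rw [fderiv_fun_add hr (hW.fun_const_smul t), fderiv_fun_const_smul hW t]
  simp [pd2]

set_option maxHeartbeats 1000000 in
lemma deriv_step {r W : ℝ × ℝ → V3} {x : ℝ × ℝ} (hr : DifferentiableAt ℝ r x)
    (hW : DifferentiableAt ℝ W x) :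
    deriv (fun t => cross3 (pd1 (Rt r W t) x) (pd2 (Rt r W t) x)) 0
      = cross3 (pd1 W x) (pd2 r x) + cross3 (pd1 r x) (pd2 W x) := by
  have heq : (fun t => cross3 (pd1 (Rt r W t) x) (pd2 (Rt r W t) x))
      = fun t => cross3 (pd1 r x) (pd2 r x)
          + t • (cross3 (pd1 W x) (pd2 r x) + cross3 (pd1 r x) (pd2 W x))
          + (t * t) • cross3 (pd1 W x) (pd2 W x) := by
    funext t
    rw [pd1_Rt hr hW t, pd2_Rt hr hW t, cross_quad]
  rw [heq]
  have h1 : HasDerivAt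
      (fun t : ℝ => t • (cross3 (pd1 W x) (pd2 r x) + cross3 (pd1 r x) (pd2 W x)))
      (cross3 (pd1 W x) (pd2 r x) + cross3 (pd1 r x) (pd2 W x)) 0 := by
    simpa using (hasDerivAt_id (0:ℝ)).smul_const
      (cross3 (pd1 W x) (pd2 r x) + cross3 (pd1 r x) (pd2 W x))
  have h2 : HasDerivAt (fun t : ℝ => (t * t) • cross3 (pd1 W x) (pd2 W x)) 0 0 := by
    simpa using ((hasDerivAt_id (0:ℝ)).mul (hasDerivAt_id (0:ℝ))).smul_const
      (cross3 (pd1 W x) (pd2 W x))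
  have h3 := ((hasDerivAt_const (0:ℝ) (cross3 (pd1 r x) (pd2 r x))).fun_add h1).fun_add h2
  simpa using h3.deriv

end AuxCalculus

theorem stmt_7
    (U : Set (ℝ × ℝ)) (hU : IsOpen U)
    (r : ℝ × ℝ → V3) (hr : ContDiffOn ℝ (⊤ : ℕ∞) r U)
    (hne1 : ∀ x ∈ U, pd1 r x ≠ 0) (hne2 : ∀ x ∈ U, pd2 r x ≠ 0)
    (horth : ∀ x ∈ U, dot3 (pd1 r x) (pd2 r x) = 0)
    (κ₁ κ₂ : ℝ × ℝ → ℝ) (hκ₁ : ContDiffOn ℝ (⊤ : ℕ∞) κ₁ U) (hκ₂ : ContDiffOn ℝ (⊤ : ℕ∞) κ₂ U)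
    (hN1 : ∀ x ∈ U, pd1 (NN r) x = (-κ₁ x) • pd1 r x)
    (hN2 : ∀ x ∈ U, pd2 (NN r) x = (-κ₂ x) • pd2 r x)
    (v₁ v₂ v_n : ℝ × ℝ → ℝ)
    (hv₁ : ContDiffOn ℝ (⊤ : ℕ∞) v₁ U) (hv₂ : ContDiffOn ℝ (⊤ : ℕ∞) v₂ U) (hvn : ContDiffOn ℝ (⊤ : ℕ∞) v_n U)
 :
    ∀ x ∈ U,
      dot3 (r x) (deriv (fun t => cross3 (pd1 (Rt r (Vfield r v₁ v₂ v_n) t) x)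
        (pd2 (Rt r (Vfield r v₁ v₂ v_n) t) x)) 0) =
      A₁ r x * A₂ r x *
        (sdiv r (fun y => -(v_n y) * dot3 (r y) (e₁ r y) + dot3 (r y) (NN r y) * v₁ y)
          (fun y => -(v_n y) * dot3 (r y) (e₂ r y) + dot3 (r y) (NN r y) * v₂ y) x + 2 * v_n x) := by

  intro x hx
  have hmem := hU.mem_nhds hx
  have hrx : ContDiffAt ℝ (⊤ : ℕ∞) r x := hr.contDiffAt hmem
  have hdr : DifferentiableAt ℝ r x := hrx.differentiableAt (by simp)
  have hdp1 : DifferentiableAt ℝ (pd1 r) x := diffAt_pd1 hrx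
  have hdp2 : DifferentiableAt ℝ (pd2 r) x := diffAt_pd2 hrx
  have hfact1 : ∀ y ∈ U, dot3 (pd1 r y) (pd1 r y) = (A₁ r y) ^ 2 :=
    fun y hy => norm3_sq (hne1 y hy)
  have hfact1' : ∀ y ∈ U, A₁ r y ≠ 0 := fun y hy => norm3_ne (hne1 y hy)
  have hfact2 : ∀ y ∈ U, dot3 (pd2 r y) (pd2 r y) = (A₂ r y) ^ 2 :=
    fun y hy => norm3_sq (hne2 y hy)
  have hfact2' : ∀ y ∈ U, A₂ r y ≠ 0 := fun y hy => norm3_ne (hne2 y hy)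
  have hdA1 : DifferentiableAt ℝ (A₁ r) x := by
    show DifferentiableAt ℝ (fun y => Real.sqrt (dot3 (pd1 r y) (pd1 r y))) x
    exact (diffAt_dot hdp1 hdp1).sqrt (d3_self_pos (hne1 x hx)).ne'
  have hdA2 : DifferentiableAt ℝ (A₂ r) x := by
    show DifferentiableAt ℝ (fun y => Real.sqrt (dot3 (pd2 r y) (pd2 r y))) x
    exact (diffAt_dot hdp2 hdp2).sqrt (d3_self_pos (hne2 x hx)).ne'
  have hde1 : DifferentiableAt ℝ (e₁ r) x := by
    show DifferentiableAt ℝ (fun y => (A₁ r y)⁻¹ • pd1 r y) x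
    exact (hdA1.inv (hfact1' x hx)).smul hdp1
  have hde2 : DifferentiableAt ℝ (e₂ r) x := by
    show DifferentiableAt ℝ (fun y => (A₂ r y)⁻¹ • pd2 r y) x
    exact (hdA2.inv (hfact2' x hx)).smul hdp2
  have hdN : DifferentiableAt ℝ (NN r) x := by
    show DifferentiableAt ℝ (fun y => cross3 (e₁ r y) (e₂ r y)) x
    exact diffAt_cross hde1 hde2
  have hdv1 : DifferentiableAt ℝ v₁ x := (hv₁.contDiffAt hmem).differentiableAt (by simp)
  have hdv2 : DifferentiableAt ℝ v₂ x := (hv₂.contDiffAt hmem).differentiableAt (by simp)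
  have hdvn : DifferentiableAt ℝ v_n x := (hvn.contDiffAt hmem).differentiableAt (by simp)
  have hdW : DifferentiableAt ℝ (Vfield r v₁ v₂ v_n) x := by
    show DifferentiableAt ℝ (fun y => v₁ y • e₁ r y + v₂ y • e₂ r y + v_n y • NN r y) x
    exact ((hdv1.smul hde1).add (hdv2.smul hde2)).add (hdvn.smul hdN)
  have e1 : fderiv ℝ (fun y => dot3 (r y) (cross3 (Vfield r v₁ v₂ v_n y) (pd2 r y))) x (1,0)
      = dot3 (pd1 r x) (cross3 (Vfield r v₁ v₂ v_n x) (pd2 r x))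
        + (dot3 (r x) (cross3 (pd1 (Vfield r v₁ v₂ v_n) x) (pd2 r x))
           + dot3 (r x) (cross3 (Vfield r v₁ v₂ v_n x) (pd1 (pd2 r) x))) := by
    rw [fdw_dot hdr (diffAt_cross hdW hdp2) (1,0), fdw_cross hdW hdp2 (1,0), d3_add_right]
    rfl
  have e2 : fderiv ℝ (fun y => dot3 (r y) (cross3 (pd1 r y) (Vfield r v₁ v₂ v_n y))) x (0,1)
      = dot3 (pd2 r x) (cross3 (pd1 r x) (Vfield r v₁ v₂ v_n x))
        + (dot3 (r x) (cross3 (pd2 (pd1 r) x) (Vfield r v₁ v₂ v_n x))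
           + dot3 (r x) (cross3 (pd1 r x) (pd2 (Vfield r v₁ v₂ v_n) x))) := by
    rw [fdw_dot hdr (diffAt_cross hdp1 hdW) (0,1), fdw_cross hdp1 hdW (0,1), d3_add_right]
    rfl
  have k3 : dot3 (pd1 r x) (cross3 (Vfield r v₁ v₂ v_n x) (pd2 r x))
      = -(A₁ r x * A₂ r x) * v_n x :=
    key3 (pd1 r x) (pd2 r x) (A₁ r x) (A₂ r x) (v₁ x) (v₂ x) (v_n x)
      (hfact1' x hx) (hfact2' x hx) (hfact1 x hx) (hfact2 x hx) (horth x hx)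
  have k4 : dot3 (pd2 r x) (cross3 (pd1 r x) (Vfield r v₁ v₂ v_n x))
      = -(A₁ r x * A₂ r x) * v_n x :=
    key4 (pd1 r x) (pd2 r x) (A₁ r x) (A₂ r x) (v₁ x) (v₂ x) (v_n x)
      (hfact1' x hx) (hfact2' x hx) (hfact1 x hx) (hfact2 x hx) (horth x hx)
  have hmix : dot3 (r x) (cross3 (Vfield r v₁ v₂ v_n x) (pd1 (pd2 r) x))
      + dot3 (r x) (cross3 (pd2 (pd1 r) x) (Vfield r v₁ v₂ v_n x)) = 0 := by
    rw [pd_symm hrx, c3_antisymm (Vfield r v₁ v₂ v_n x) (pd2 (pd1 r) x), d3_neg_right]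
    ring
  have hev1 : (fun y => (-(v_n y) * dot3 (r y) (e₁ r y) + dot3 (r y) (NN r y) * v₁ y) * A₂ r y)
      =ᶠ[nhds x] (fun y => dot3 (r y) (cross3 (Vfield r v₁ v₂ v_n y) (pd2 r y))) := by
    filter_upwards [hmem] with y hy
    exact key1 (r y) (pd1 r y) (pd2 r y) (A₁ r y) (A₂ r y) (v₁ y) (v₂ y) (v_n y)
      (hfact1' y hy) (hfact2' y hy) (hfact1 y hy) (hfact2 y hy) (horth y hy)
  have hev2 : (fun y => (-(v_n y) * dot3 (r y) (e₂ r y) + dot3 (r y) (NN r y) * v₂ y) * A₁ r y)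
      =ᶠ[nhds x] (fun y => dot3 (r y) (cross3 (pd1 r y) (Vfield r v₁ v₂ v_n y))) := by
    filter_upwards [hmem] with y hy
    exact key2 (r y) (pd1 r y) (pd2 r y) (A₁ r y) (A₂ r y) (v₁ y) (v₂ y) (v_n y)
      (hfact1' y hy) (hfact2' y hy) (hfact1 y hy) (hfact2 y hy) (horth y hy)
  have hP1 : pd1 (fun y => (-(v_n y) * dot3 (r y) (e₁ r y) + dot3 (r y) (NN r y) * v₁ y)
        * A₂ r y) x
      = fderiv ℝ (fun y => dot3 (r y) (cross3 (Vfield r v₁ v₂ v_n y) (pd2 r y))) x (1,0) := by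
    simp only [pd1]
    rw [hev1.fderiv_eq]
  have hP2 : pd2 (fun y => (-(v_n y) * dot3 (r y) (e₂ r y) + dot3 (r y) (NN r y) * v₂ y)
        * A₁ r y) x
      = fderiv ℝ (fun y => dot3 (r y) (cross3 (pd1 r y) (Vfield r v₁ v₂ v_n y))) x (0,1) := by
    simp only [pd2]
    rw [hev2.fderiv_eq]
  have hsd : sdiv r (fun y => -(v_n y) * dot3 (r y) (e₁ r y) + dot3 (r y) (NN r y) * v₁ y)
      (fun y => -(v_n y) * dot3 (r y) (e₂ r y) + dot3 (r y) (NN r y) * v₂ y) x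
      = (pd1 (fun y => (-(v_n y) * dot3 (r y) (e₁ r y) + dot3 (r y) (NN r y) * v₁ y)
            * A₂ r y) x
         + pd2 (fun y => (-(v_n y) * dot3 (r y) (e₂ r y) + dot3 (r y) (NN r y) * v₂ y)
            * A₁ r y) x)
        / (A₁ r x * A₂ r x) := rfl
  rw [deriv_step hdr hdW, d3_add_right, hsd, hP1, hP2, e1, e2, k3, k4]
  have hA1x := hfact1' x hx
  have hA2x := hfact2' x hx
  field_simp
  linear_combination -hmix
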